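/- Let a, b > 0, n ≥ 1 real numbers, λ > n/2, and suppose (2λ - n)·a ≥ ((n+1)/n)·λ²·b. Then λ ≥ n/2 + (n/2)·ρ, where ρ = (2a - (n+1)b - 2a·√(1 - (n+1)b/a)) / ((n+1)b). -/
import Mathlib


/-- If `a, b > 0`, `n ≥ 1`, `λ > n/2` and `(2λ - n)·a ≥ ((n+1)/n)·λ²·b`, then
`λ ≥ n/2 + (n/2)·ρ`, where `ρ = (2a - (n+1)b - 2a√(1 - (n+1)b/a))/((n+1)b)`. -/
theorem stmt_4 (a b n lam : ℝ) (ha : 0 < a) (hb : 0 < b) (hn : 1 ≤ n)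
    (hlam : lam > n / 2)
    (h : (2 * lam - n) * a ≥ ((n + 1) / n) * lam ^ 2 * b)
    (ρ : ℝ)
    (hρ : ρ = (2 * a - (n + 1) * b - 2 * a * Real.sqrt (1 - (n + 1) * b / a)) /
      ((n + 1) * b)) :
    lam ≥ n / 2 + (n / 2) * ρ := by
  have hn0 : (0:ℝ) < n := lt_of_lt_of_le one_pos hn
  set c := (n + 1) * b with hcdef
  have hc : 0 < c := by positivity
  -- multiply hypothesis by n
  have hq : c * lam ^ 2 - 2 * n * a * lam + n ^ 2 * a ≤ 0 := by
    have := mul_le_mul_of_nonneg_left h (le_of_lt hn0)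
    have hne : n ≠ 0 := ne_of_gt hn0
    field_simp at this
    nlinarith [this]
  have hq' : 0 ≤ c * (-(c * lam ^ 2 - 2 * n * a * lam + n ^ 2 * a)) :=
    mul_nonneg hc.le (by linarith)
  have hac : c ≤ a := by
    nlinarith [sq_nonneg (c * lam - n * a), mul_pos (mul_pos hn0 hn0) ha]
  have harg : (0:ℝ) ≤ 1 - c / a := by
    rw [sub_nonneg, div_le_one ha]; exact hac
  set s := Real.sqrt (1 - c / a) with hsdef
  have hs0 : 0 ≤ s := Real.sqrt_nonneg _
  have hs2 : s ^ 2 = 1 - c / a := Real.sq_sqrt harg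
  have hs2' : a * s ^ 2 = a - c := by
    rw [hs2]; field_simp
  have heq : (n * a * s) ^ 2 = n ^ 2 * a * (a - c) := by
    rw [mul_pow, mul_pow, ← hs2']; ring
  have hsq : (c * lam - n * a) ^ 2 ≤ (n * a * s) ^ 2 := by
    rw [heq]; nlinarith [hq']
  have key : -(n * a * s) ≤ c * lam - n * a := by
    nlinarith [mul_nonneg (mul_nonneg hn0.le ha.le) hs0]
  rw [hρ, ge_iff_le]
  set t := (2 * a - c - 2 * a * s) / c with htdef
  have hct : c * t = 2 * a - c - 2 * a * s := mul_div_cancel₀ _ hc.ne'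
  by_contra hcon
  push_neg at hcon
  have hmul := mul_lt_mul_of_pos_left hcon hc
  have hexp : c * (n / 2 + n / 2 * t) = n / 2 * c + n / 2 * (c * t) := by ring
  rw [hexp, hct] at hmul
  nlinarith [key]
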